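/- Let X be a simplicial set and let c be a k-sphere in X (k ≥ 1) whose faces c_0, …, c_k all have degeneracy at least 2. Let r be the minimal value of dgn(c_i) over 0 ≤ i ≤ k and let m be the smallest ordinal with dgn(c_m) = r. If k < 2r + 3, then c_m = c_{m+1}. -/

import Mathlib

/-!
Every face lowers the degeneracy by at most one, and `x δ_i` has smaller degeneracy than `x`
only if `x` is properly reduced at `i` or `i - 1`, i.e. `x = x δ_j σ_j` for such a `j`.
As `dgn (c m) ≥ 1`, the face `c m` is properly reduced at some `t`; the cycle equations and the
minimality of `m` force `m ≤ t` and transport the reduction to `c (t+1)` (at `m`) and then to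
`c (m+1)` (at `t` or `t - 1`). At `t`, both `c m` and `c (m+1)` are `σ_t` of the same face. At
`t - 1`, `c m = σ_t z` and `c (m+1) = σ_{t-1} z`, and the cycle equations through `c (t+2)` show
that `z` is itself degenerate at `t - 1`, whence `σ_t z = σ_{t-1} z`.
-/

open CategoryTheory Simplicial

namespace AufhebungSSet

/-- An `n`-simplex `x` of a simplicial set `X` is degenerate if it is the image of a
simplex of strictly smaller dimension under the action of an epimorphism of `Δ`. -/
def IsDegen (X : SSet) {n : ℕ} (x : X _⦋n⦌) : Prop :=
  ∃ m : ℕ, m < n ∧ ∃ ε : (⦋n⦌ : SimplexCategory) ⟶ ⦋m⦌,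
    Function.Surjective ε.toOrderHom ∧ ∃ y : X _⦋m⦌, x = X.map ε.op y

/-- The degeneracy `dgn x = n - k`, where `k` is the least dimension from which `x`
is the image of a simplex under the action of an epimorphism; by the Eilenberg–Zilber
lemma this is the dimension of the nondegenerate simplex of which `x` is a degeneracy. -/
noncomputable def dgn (X : SSet) {n : ℕ} (x : X _⦋n⦌) : ℕ :=
  n - sInf (Set.ofPred fun k : ℕ => ∃ ε : (⦋n⦌ : SimplexCategory) ⟶ ⦋k⦌,
    Function.Surjective ε.toOrderHom ∧ ∃ y : X _⦋k⦌, x = X.map ε.op y)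

/-- `i` reduces `x` when `dgn (x δᵢ) = dgn x - 1`. -/
def Reduces (X : SSet) {n : ℕ} (i : Fin (n + 2)) (x : X _⦋n + 1⦌) : Prop :=
  dgn X (X.map (SimplexCategory.δ i).op x) + 1 = dgn X x

/-- `i` properly reduces `x` when `x = x δᵢ σᵢ`. -/
def ProperlyReduces (X : SSet) {n : ℕ} (i : Fin (n + 1)) (x : X _⦋n + 1⦌) : Prop :=
  x = X.map (SimplexCategory.σ i).op (X.map (SimplexCategory.δ i.castSucc).op x)

/-- A `(K+2)`-sphere: a family `c₀, …, c_{K+2}` of `(K+1)`-simplices satisfying the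
cycle equations `cⱼ δᵢ = cᵢ δ_{j-1}` for `i < j` (here reindexed: `c_{j+1} δᵢ = cᵢ δⱼ`
for `i ≤ j`). -/
def IsSphere (X : SSet) {K : ℕ} (c : Fin (K + 3) → X _⦋K + 1⦌) : Prop :=
  ∀ i j : Fin (K + 2), i ≤ j →
    X.map (SimplexCategory.δ i).op (c j.succ) = X.map (SimplexCategory.δ j).op (c i.castSucc)

/-- `y` fills the sphere `c` when `y δᵢ = cᵢ` for all `i`. -/
def IsFiller (X : SSet) {K : ℕ} (y : X _⦋K + 2⦌) (c : Fin (K + 3) → X _⦋K + 1⦌) : Prop :=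
  ∀ i : Fin (K + 3), X.map (SimplexCategory.δ i).op y = c i

section Development

variable {X : SSet}

/-- The set whose infimum enters the definition of `dgn`: `dgn X x = n - sInf (epiDims X x)`. -/
def epiDims (X : SSet) {n : ℕ} (x : X _⦋n⦌) : Set ℕ :=
  {k | ∃ ε : ⦋n⦌ ⟶ ⦋k⦌, Function.Surjective ε.toOrderHom ∧ ∃ y : X _⦋k⦌, x = X.map ε.op y}

lemma map_op_comp_apply {a b d : SimplexCategory} (f : a ⟶ b) (g : b ⟶ d)
    (y : X.obj (Opposite.op d)) : X.map (f ≫ g).op y = X.map f.op (X.map g.op y) := by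
  simp

lemma le_dgn_add_of_mem_epiDims {n k : ℕ} {x : X _⦋n⦌} (hk : k ∈ epiDims X x) :
    n ≤ dgn X x + k := by
  have : sInf (epiDims X x) ≤ k := Nat.sInf_le hk
  change n ≤ n - sInf (epiDims X x) + k
  omega

lemma exists_eq_map_of_add_dgn_eq {n : ℕ} (x : X _⦋n⦌) :
    ∃ k, k + dgn X x = n ∧
      ∃ ε : ⦋n⦌ ⟶ ⦋k⦌, Function.Surjective ε.toOrderHom ∧ ∃ y : X _⦋k⦌, x = X.map ε.op y := by
  have hn : n ∈ epiDims X x := ⟨𝟙 _, fun t => ⟨t, rfl⟩, x, by simp⟩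
  refine ⟨sInf (epiDims X x), ?_, Nat.sInf_mem ⟨n, hn⟩⟩
  have : sInf (epiDims X x) ≤ n := Nat.sInf_le hn
  change sInf (epiDims X x) + (n - sInf (epiDims X x)) = n
  omega

open CategoryTheory.Limits in
lemma exists_mem_epiDims_map {n k : ℕ} (f : ⦋n⦌ ⟶ ⦋k⦌) (y : X _⦋k⦌) :
    ∃ j ∈ epiDims X (X.map f.op y), j ≤ k ∧ (¬ Function.Surjective f.toOrderHom → j < k) := by
  refine ⟨(image f).len, ⟨factorThruImage f, SimplexCategory.epi_iff_surjective.mp inferInstance,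
    X.map (image.ι f).op y, ?_⟩, SimplexCategory.le_of_mono (image.ι f), fun hf => ?_⟩
  · rw [← map_op_comp_apply, image.fac]
  · refine lt_of_le_of_ne (SimplexCategory.le_of_mono (image.ι f)) fun hj => hf ?_
    have := (SimplexCategory.isIso_iff_of_mono (image.ι f)).mpr hj
    rw [← SimplexCategory.epi_iff_surjective, ← image.fac f]
    infer_instance

lemma dgn_le_dgn_δ_add_one {n : ℕ} (x : X _⦋n + 1⦌) (i : Fin (n + 2)) :
    dgn X x ≤ dgn X (X.δ i x) + 1 := by
  obtain ⟨k, hk, ε, -, y, rfl⟩ := exists_eq_map_of_add_dgn_eq x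
  obtain ⟨j, hj, hjk, -⟩ := exists_mem_epiDims_map (SimplexCategory.δ i ≫ ε) y
  rw [map_op_comp_apply] at hj
  have := le_dgn_add_of_mem_epiDims (x := X.δ i (X.map ε.op y)) hj
  omega

lemma dgn_σ {n : ℕ} (w : X _⦋n⦌) (j : Fin (n + 1)) : dgn X (X.σ j w) = dgn X w + 1 := by
  have hle := dgn_le_dgn_δ_add_one (X.σ j w) j.castSucc
  rw [SSet.δ_comp_σ_self_apply] at hle
  obtain ⟨k, hk, ε, hε, y, rfl⟩ := exists_eq_map_of_add_dgn_eq w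
  have hmem : k ∈ epiDims X (X.σ j (X.map ε.op y)) :=
    ⟨SimplexCategory.σ j ≫ ε, hε.comp (Fin.predAbove_surjective j), y,
      by rw [map_op_comp_apply]; rfl⟩
  have := le_dgn_add_of_mem_epiDims hmem
  omega

lemma properlyReduces_iff {n : ℕ} (j : Fin (n + 1)) (x : X _⦋n + 1⦌) :
    ProperlyReduces X j x ↔ x = X.σ j (X.δ j.castSucc x) := Iff.rfl

lemma properlyReduces_σ {n : ℕ} (j : Fin (n + 1)) (w : X _⦋n⦌) :
    ProperlyReduces X j (X.σ j w) := by
  rw [properlyReduces_iff, SSet.δ_comp_σ_self_apply]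

lemma ProperlyReduces.δ_succ_eq {n : ℕ} {j : Fin (n + 1)} {x : X _⦋n + 1⦌}
    (h : ProperlyReduces X j x) : X.δ j.succ x = X.δ j.castSucc x := by
  rw [(properlyReduces_iff j x).mp h, SSet.δ_comp_σ_succ_apply, SSet.δ_comp_σ_self_apply]

lemma ProperlyReduces.dgn_δ {n : ℕ} {j : Fin (n + 1)} {x : X _⦋n + 1⦌}
    (h : ProperlyReduces X j x) : dgn X (X.δ j.castSucc x) + 1 = dgn X x := by
  conv_rhs => rw [(properlyReduces_iff j x).mp h]
  rw [dgn_σ]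

lemma properlyReduces_of_eq_map {n k : ℕ} {x : X _⦋n + 1⦌} {ε : ⦋n + 1⦌ ⟶ ⦋k⦌} {y : X _⦋k⦌}
    (hx : x = X.map ε.op y) {j : Fin (n + 1)}
    (hj : ε.toOrderHom j.castSucc = ε.toOrderHom j.succ) : ProperlyReduces X j x := by
  obtain ⟨θ, rfl⟩ := SimplexCategory.eq_σ_comp_of_not_injective' ε j hj
  rw [hx, map_op_comp_apply]
  exact properlyReduces_σ j _

lemma exists_properlyReduces_of_dgn_pos {n : ℕ} {x : X _⦋n + 1⦌} (h : 0 < dgn X x) :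
    ∃ j, ProperlyReduces X j x := by
  obtain ⟨k, hk, ε, -, y, hx⟩ := exists_eq_map_of_add_dgn_eq x
  have hε : ¬ Function.Injective ε.toOrderHom := fun hinj => by
    have := Fintype.card_le_of_injective _ hinj
    simp only [Fintype.card_fin] at this
    omega
  obtain ⟨j, θ, rfl⟩ := SimplexCategory.eq_σ_comp_of_not_injective ε hε
  rw [map_op_comp_apply] at hx
  exact ⟨j, hx ▸ properlyReduces_σ j _⟩

lemma exists_adjacent_eq_of_apply_succAbove_eq {α : Type*} [PartialOrder α] {n : ℕ}
    {f : Fin (n + 2) → α} (hf : Monotone f) {i : Fin (n + 2)} {t : Fin (n + 1)}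
    (ht : f (i.succAbove t) = f i) :
    ∃ j : Fin (n + 1), (j.castSucc = i ∨ j.succ = i) ∧ f j.castSucc = f j.succ := by
  rcases lt_or_gt_of_ne (i.succAbove_ne t) with hlt | hgt
  · have hi : i ≠ 0 := Fin.ne_zero_of_lt hlt
    refine ⟨i.pred hi, Or.inr (Fin.succ_pred i hi), le_antisymm (hf (Fin.castSucc_le_succ _)) ?_⟩
    rw [Fin.succ_pred, ← ht]
    exact hf (Fin.le_castSucc_iff.mpr (by rwa [Fin.succ_pred]))
  · have hi : i ≠ Fin.last _ := Fin.ne_last_of_lt hgt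
    refine ⟨i.castPred hi, Or.inl (Fin.castSucc_castPred i hi),
      le_antisymm (hf (Fin.castSucc_le_succ _)) ?_⟩
    rw [Fin.castSucc_castPred, ← ht]
    exact hf (Fin.castSucc_lt_iff_succ_le.mp (by rwa [Fin.castSucc_castPred]))

/-- If `δ_i ≫ ε` were not surjective for the minimal epimorphism `ε` through which `x` factors,
`x δ_i` would factor through a lower dimension; so `ε i` is the image of a neighbour of `i`. -/
lemma exists_properlyReduces_of_dgn_δ_lt {n : ℕ} {x : X _⦋n + 1⦌} {i : Fin (n + 2)}
    (h : dgn X (X.δ i x) < dgn X x) :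
    ∃ j : Fin (n + 1), ProperlyReduces X j x ∧ (j.castSucc = i ∨ j.succ = i) := by
  obtain ⟨k, hk, ε, -, y, hx⟩ := exists_eq_map_of_add_dgn_eq x
  have hsurj : Function.Surjective (SimplexCategory.δ i ≫ ε).toOrderHom := by
    by_contra hns
    obtain ⟨j, hj, -, hjk⟩ := exists_mem_epiDims_map (SimplexCategory.δ i ≫ ε) y
    rw [map_op_comp_apply, ← hx] at hj
    have := le_dgn_add_of_mem_epiDims (x := X.δ i x) hj
    have := hjk hns
    omega
  obtain ⟨t, ht⟩ := hsurj (ε.toOrderHom i)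
  obtain ⟨j, hji, hj⟩ := exists_adjacent_eq_of_apply_succAbove_eq ε.toOrderHom.monotone ht
  exact ⟨j, properlyReduces_of_eq_map hx hj, hji⟩

lemma σ_succ_eq_σ_castSucc_of_δ_σ_eq {n : ℕ} (b : Fin (n + 1)) (z : X _⦋n + 1⦌)
    (h : X.δ b.succ.succ (X.σ b.castSucc z) = z) : X.σ b.succ z = X.σ b.castSucc z := by
  rw [SSet.δ_comp_σ_of_gt_apply (Fin.castSucc_lt_succ (i := b))] at h
  rw [← h, SSet.σ_comp_σ_apply le_rfl]

lemma δ_σ_self_mk {n i : ℕ} (hi : i < n + 1) (z : X _⦋n⦌) :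
    X.δ ⟨i, by omega⟩ (X.σ ⟨i, hi⟩ z) = z :=
  SSet.δ_comp_σ_self_apply ⟨i, hi⟩ z

lemma δ_σ_succ_mk {n i : ℕ} (hi : i < n + 1) (z : X _⦋n⦌) :
    X.δ ⟨i + 1, by omega⟩ (X.σ ⟨i, hi⟩ z) = z :=
  SSet.δ_comp_σ_succ_apply ⟨i, hi⟩ z

section Sphere

variable {K : ℕ} {c : Fin (K + 3) → X _⦋K + 1⦌}

lemma IsSphere.δ_eq (hc : IsSphere X c) {i j : ℕ} (hij : i ≤ j) (hj : j < K + 2) :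
    X.δ ⟨i, by omega⟩ (c ⟨j + 1, by omega⟩) = X.δ ⟨j, hj⟩ (c ⟨i, by omega⟩) :=
  hc ⟨i, _⟩ ⟨j, hj⟩ hij

structure IsFirstOfMinDgn (c : Fin (K + 3) → X _⦋K + 1⦌) (r m : ℕ) : Prop where
  lt : m < K + 3
  dgn_eq : dgn X (c ⟨m, lt⟩) = r
  le_dgn (u : Fin (K + 3)) : r ≤ dgn X (c u)
  lt_dgn (u : Fin (K + 3)) : (u : ℕ) < m → r < dgn X (c u)

namespace IsFirstOfMinDgn

variable {r m : ℕ}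

lemma lt_dgn_of_properlyReduces (h : IsFirstOfMinDgn c r m) (hc : IsSphere X c) {t v : ℕ}
    (ht : t < K + 1) (hv : v < K + 3) (htm : t < m) (htv : t < v)
    (hpr : ProperlyReduces X ⟨t, ht⟩ (c ⟨v, hv⟩)) : r < dgn X (c ⟨v, hv⟩) := by
  obtain ⟨w, rfl⟩ : ∃ w, v = w + 1 := ⟨v - 1, by omega⟩
  have hface := hpr.dgn_δ
  rw [Fin.castSucc_mk, hc.δ_eq (by omega : t ≤ w) (by omega)] at hface
  have := dgn_le_dgn_δ_add_one (c ⟨t, by omega⟩) ⟨w, by omega⟩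
  have := h.lt_dgn ⟨t, by omega⟩ htm
  omega

lemma le_of_properlyReduces (h : IsFirstOfMinDgn c r m) (hc : IsSphere X c) {t : ℕ}
    (ht : t < K + 1) (hpr : ProperlyReduces X ⟨t, ht⟩ (c ⟨m, h.lt⟩)) : m ≤ t := by
  by_contra! htm
  have := h.lt_dgn_of_properlyReduces hc ht h.lt htm htm hpr
  rw [h.dgn_eq] at this
  exact this.false

/-- The face lowers the degeneracy, so `c v` is properly reduced at `m` or `m - 1`, and the
minimality of `m` excludes `m - 1`. -/
lemma properlyReduces_of_dgn_δ_lt (h : IsFirstOfMinDgn c r m) (hc : IsSphere X c) {v : ℕ}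
    (hv : v < K + 3) (hmv : m ≤ v) (hmK : m < K + 1)
    (hface : dgn X (X.δ ⟨m, by omega⟩ (c ⟨v, hv⟩)) < r) :
    ProperlyReduces X ⟨m, hmK⟩ (c ⟨v, hv⟩) := by
  have hle := dgn_le_dgn_δ_add_one (c ⟨v, hv⟩) ⟨m, by omega⟩
  have hge := h.le_dgn ⟨v, hv⟩
  obtain ⟨⟨j, hj⟩, hpr, hji⟩ :=
    exists_properlyReduces_of_dgn_δ_lt (x := c ⟨v, hv⟩) (i := ⟨m, by omega⟩) (by omega)
  simp only [Fin.castSucc_mk, Fin.succ_mk, Fin.mk.injEq] at hji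
  rcases hji with rfl | rfl
  · exact hpr
  · have := h.lt_dgn_of_properlyReduces hc hj hv (by omega) (by omega) hpr
    omega

lemma eq_succ_of_properlyReduces_self (h : IsFirstOfMinDgn c r m) (hc : IsSphere X c)
    (hmK : m < K + 1) (hpr : ProperlyReduces X ⟨m, hmK⟩ (c ⟨m, h.lt⟩)) :
    c ⟨m, h.lt⟩ = c ⟨m + 1, by omega⟩ := by
  have hcyc := hc.δ_eq (le_refl m) (by omega)
  have hface := hpr.dgn_δ
  rw [Fin.castSucc_mk, h.dgn_eq] at hface
  have hpr' := h.properlyReduces_of_dgn_δ_lt hc (v := m + 1) (by omega) (by omega) hmK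
    (by rw [hcyc]; omega)
  calc c ⟨m, h.lt⟩ = X.σ ⟨m, hmK⟩ (X.δ ⟨m, by omega⟩ (c ⟨m, h.lt⟩)) := hpr
    _ = X.σ ⟨m, hmK⟩ (X.δ ⟨m, by omega⟩ (c ⟨m + 1, by omega⟩)) := by rw [hcyc]
    _ = c ⟨m + 1, by omega⟩ := hpr'.symm

/-- The case `c m = σ_{b+1} z`, `c (m+1) = σ_b z`: the cycle equations force `c (b+3) = σ_m z`,
and then `δ_{b+2} σ_b z = z`, which makes `z` degenerate at `b`. -/
lemma eq_succ_of_eq_σ (h : IsFirstOfMinDgn c r m) (hc : IsSphere X c) {b : ℕ}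
    (hb : b + 1 < K + 1) (hmb : m ≤ b)
    (hm : ¬ ProperlyReduces X ⟨m, by omega⟩ (c ⟨m, h.lt⟩)) {z : X _⦋K⦌} (hz : dgn X z < r)
    (h0 : c ⟨m, h.lt⟩ = X.σ ⟨b + 1, hb⟩ z) (h1 : c ⟨m + 1, by omega⟩ = X.σ ⟨b, by omega⟩ z) :
    c ⟨m, h.lt⟩ = c ⟨m + 1, by omega⟩ := by
  have hmb : m < b := by
    refine hmb.lt_of_ne fun hmb => hm ?_
    subst hmb
    refine h.properlyReduces_of_dgn_δ_lt hc h.lt le_rfl _ ?_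
    rwa [← hc.δ_eq (le_refl m) (by omega), h1, δ_σ_self_mk]
  have hface : X.δ ⟨m, by omega⟩ (c ⟨b + 3, by omega⟩) = z := by
    rw [hc.δ_eq (j := b + 2) (by omega) (by omega), h0, δ_σ_succ_mk]
  have h3 : c ⟨b + 3, by omega⟩ = X.σ ⟨m, by omega⟩ z := by
    have hpr := h.properlyReduces_of_dgn_δ_lt hc (v := b + 3) (by omega) (by omega) (by omega)
      (by rw [hface]; exact hz)
    calc c ⟨b + 3, _⟩ = X.σ ⟨m, _⟩ (X.δ ⟨m, _⟩ (c ⟨b + 3, _⟩)) := hpr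
      _ = X.σ ⟨m, _⟩ z := by rw [hface]
  have htight : X.δ ⟨b + 2, by omega⟩ (X.σ ⟨b, by omega⟩ z) = z := by
    rw [← h1, ← hc.δ_eq (i := m + 1) (by omega) (by omega), h3, δ_σ_succ_mk]
  obtain ⟨L, rfl⟩ : ∃ L, K = L + 1 := ⟨K - 1, by omega⟩
  rw [h0, h1]
  exact σ_succ_eq_σ_castSucc_of_δ_σ_eq (n := L) ⟨b, by omega⟩ z htight

lemma eq_succ_of_properlyReduces_gt (h : IsFirstOfMinDgn c r m) (hc : IsSphere X c) {t : ℕ}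
    (ht : t < K + 1) (hmt : m < t) (hpr : ProperlyReduces X ⟨t, ht⟩ (c ⟨m, h.lt⟩))
    (hm : ¬ ProperlyReduces X ⟨m, by omega⟩ (c ⟨m, h.lt⟩)) :
    c ⟨m, h.lt⟩ = c ⟨m + 1, by omega⟩ := by
  set z := X.δ ⟨t, by omega⟩ (c ⟨m, h.lt⟩)
  have hz : dgn X z + 1 = r := by
    rw [← h.dgn_eq]
    exact hpr.dgn_δ
  have hzt : X.δ ⟨m, by omega⟩ (c ⟨t + 1, by omega⟩) = z := hc.δ_eq hmt.le (by omega)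
  have hprt := h.properlyReduces_of_dgn_δ_lt hc (v := t + 1) (by omega) (by omega) (by omega)
    (by rw [hzt]; omega)
  have hzm : X.δ ⟨t, by omega⟩ (c ⟨m + 1, by omega⟩) = z := by
    rw [← hc.δ_eq (i := m + 1) hmt (by omega), ← hzt]
    exact hprt.δ_succ_eq
  have hdrop :
      dgn X (X.δ ⟨t, by omega⟩ (c ⟨m + 1, by omega⟩)) < dgn X (c ⟨m + 1, by omega⟩) := by
    rw [hzm]
    have := h.le_dgn ⟨m + 1, by omega⟩
    omega
  obtain ⟨⟨j, hj⟩, hprj, hjt⟩ := exists_properlyReduces_of_dgn_δ_lt hdrop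
  simp only [Fin.castSucc_mk, Fin.succ_mk, Fin.mk.injEq] at hjt
  rcases hjt with rfl | rfl
  · calc c ⟨m, h.lt⟩ = X.σ ⟨j, hj⟩ z := hpr
      _ = c ⟨m + 1, by omega⟩ := by rw [← hzm]; exact hprj.symm
  · refine h.eq_succ_of_eq_σ hc ht (by omega) hm (z := z) (by omega) hpr ?_
    have hδj := hprj.δ_succ_eq
    rw [Fin.succ_mk, Fin.castSucc_mk] at hδj
    calc c ⟨m + 1, _⟩ = X.σ ⟨j, hj⟩ (X.δ ⟨j, by omega⟩ (c ⟨m + 1, _⟩)) := hprj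
      _ = X.σ ⟨j, hj⟩ z := by rw [← hδj, hzm]

end IsFirstOfMinDgn

end Sphere

end Development

theorem mplus1_d_general (X : SSet) (K : ℕ) (c : Fin (K + 3) → X _⦋K + 1⦌) (hc : IsSphere X c)
    (r : ℕ) (hr : ∀ u : Fin (K + 3), r ≤ dgn X (c u))
    (m : Fin (K + 3)) (hm : dgn X (c m) = r)
    (hmmin : ∀ u : Fin (K + 3), dgn X (c u) = r → m ≤ u)
    (hdeg : ∀ u : Fin (K + 3), 2 ≤ dgn X (c u)) :
    ∃ h : (m : ℕ) + 1 < K + 3, c m = c ⟨(m : ℕ) + 1, h⟩ := by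
  obtain ⟨m, hm3⟩ := m
  have hfirst : IsFirstOfMinDgn c r m :=
    ⟨hm3, hm, hr, fun u hu => (hr u).lt_of_ne fun hu' => (hmmin u hu'.symm).not_gt hu⟩
  obtain ⟨⟨t, ht⟩, hpr⟩ := exists_properlyReduces_of_dgn_pos (x := c ⟨m, hm3⟩)
    (by have := hdeg ⟨m, hm3⟩; omega)
  have hmt := hfirst.le_of_properlyReduces hc ht hpr
  refine ⟨(by omega : m + 1 < K + 3), ?_⟩
  by_cases hmm : ProperlyReduces X ⟨m, by omega⟩ (c ⟨m, hm3⟩)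
  · exact hfirst.eq_succ_of_properlyReduces_self hc _ hmm
  · exact hfirst.eq_succ_of_properlyReduces_gt hc ht
      (hmt.lt_of_ne fun hmt => hmm (by subst hmt; exact hpr)) hpr hmm

/-- If all faces of a sphere `c` of dimension `k = K + 2` have degeneracy at least 2,
`r` is the minimal degeneracy, `m` is the first face of degeneracy `r`, and
`k < 2r + 3`, then `c_m = c_{m+1}`. -/
theorem mplus1_d (X : SSet) (K : ℕ) (c : Fin (K + 3) → X _⦋K + 1⦌) (hc : IsSphere X c)
    (r : ℕ) (hr : ∀ u : Fin (K + 3), r ≤ dgn X (c u))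
    (m : Fin (K + 3)) (hm : dgn X (c m) = r)
    (hmmin : ∀ u : Fin (K + 3), dgn X (c u) = r → m ≤ u)
    (hdeg : ∀ u : Fin (K + 3), 2 ≤ dgn X (c u))
    (hk : K + 2 < 2 * r + 3) :
    ∃ h : (m : ℕ) + 1 < K + 3, c m = c ⟨(m : ℕ) + 1, h⟩ :=
  mplus1_d_general X K c hc r hr m hm hmmin hdeg

end AufhebungSSet
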